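/- Assume v(x) > 0 for all x ∈ [0,1] and H₀(x) − U(y) > 0 for all x ∈ [0,1] and all y ≥ x, so that the first hitting time T(x,y) = min{t ≥ 0 : y(t,x) = y} is finite for all x ∈ [0,1], y ≥ x. Then the following are equivalent: (1) there are no collisions on [0,∞), i.e. y(t,x₁) ≠ y(t,x₂) for all t ≥ 0 and x₁ ≠ x₂ in [0,1]; (2) for every y > 0 the function x ↦ T(x,y) is strictly decreasing on [0, min{y,1}]. -/

import Mathlib

open Set intervalIntegral MeasureTheory

/-- Potential energy `U(y) = -∫₀^y F(z) dz`. -/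
noncomputable def potEnergy (F : ℝ → ℝ) (z : ℝ) : ℝ := -∫ s in (0:ℝ)..z, F s

/-- Initial full energy `H₀(x) = v(x)²/2 + U(x)`. -/
noncomputable def initEnergy (F v : ℝ → ℝ) (x : ℝ) : ℝ := v x ^ 2 / 2 + potEnergy F x

lemma potEnergy_hasDerivAt {F : ℝ → ℝ} (hF : Continuous F) (z : ℝ) :
    HasDerivAt (potEnergy F) (-(F z)) z := by
  have h : HasDerivAt (fun u => ∫ s in (0:ℝ)..u, F s) (F z) z :=
    integral_hasDerivAt_right (hF.intervalIntegrable _ _)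
      (hF.stronglyMeasurableAtFilter _ _) hF.continuousAt
  exact h.neg

/-- Under the assumptions `v(x) > 0` and `H₀(x) − U(y) > 0` for
`x ∈ [0,1]`, `y ≥ x` (so that the first hitting time `T(x,Y) = min {t ≥ 0 : y(t,x) = Y}`
exists for `Y ≥ x`), the following are equivalent:
(1) there are no collisions on `[0,∞)`;
(2) for every `Y > 0` the function `x ↦ T(x,Y)` is strictly decreasing on `[0, min{Y,1}]`. -/
theorem no_collisions_iff_hitting_time_strictAnti
    (F v : ℝ → ℝ) (y y' : ℝ → ℝ → ℝ) (T : ℝ → ℝ → ℝ)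
    (hF : ContDiff ℝ (⊤ : ℕ∞) F)
    (hv_pos : ∀ x ∈ Icc (0:ℝ) 1, 0 < v x)
    (hH : ∀ x ∈ Icc (0:ℝ) 1, ∀ Y, x ≤ Y → 0 < initEnergy F v x - potEnergy F Y)
    (hy0 : ∀ x ∈ Icc (0:ℝ) 1, y x 0 = x)
    (hy0' : ∀ x ∈ Icc (0:ℝ) 1, y' x 0 = v x)
    (hode1 : ∀ x ∈ Icc (0:ℝ) 1, ∀ t, 0 ≤ t → HasDerivAt (y x) (y' x t) t)
    (hode2 : ∀ x ∈ Icc (0:ℝ) 1, ∀ t, 0 ≤ t → HasDerivAt (y' x) (F (y x t)) t)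
    (hT : ∀ x ∈ Icc (0:ℝ) 1, ∀ Y, x ≤ Y → IsLeast {t : ℝ | 0 ≤ t ∧ y x t = Y} (T x Y)) :
    (∀ t, 0 ≤ t → ∀ x₁ ∈ Icc (0:ℝ) 1, ∀ x₂ ∈ Icc (0:ℝ) 1, x₁ ≠ x₂ → y x₁ t ≠ y x₂ t) ↔
      (∀ Y, 0 < Y → StrictAntiOn (fun x => T x Y) (Icc 0 (min Y 1))) := by
  have hFc : Continuous F := hF.continuous
  -- continuity of trajectories and velocities on [0,∞)
  have hycont : ∀ x ∈ Icc (0:ℝ) 1, ContinuousOn (y x) (Ici 0) := fun x hx =>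
    fun t ht => ((hode1 x hx t ht).continuousAt).continuousWithinAt
  have hy'cont : ∀ x ∈ Icc (0:ℝ) 1, ContinuousOn (y' x) (Ici 0) := fun x hx =>
    fun t ht => ((hode2 x hx t ht).continuousAt).continuousWithinAt
  -- energy conservation
  have hE : ∀ x ∈ Icc (0:ℝ) 1, ∀ t, 0 ≤ t →
      y' x t ^ 2 / 2 + potEnergy F (y x t) = initEnergy F v x := by
    intro x hx t ht
    set E : ℝ → ℝ := fun s => y' x s ^ 2 / 2 + potEnergy F (y x s) with hEdef
    have hEderiv : ∀ s ∈ Ico (0:ℝ) t, HasDerivWithinAt E 0 (Ici s) s := by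
      intro s hs
      have h1 : HasDerivAt (fun u => y' x u ^ 2 / 2) (y' x s * F (y x s)) s := by
        have := ((hode2 x hx s hs.1).fun_pow 2)
        have h := this.div_const 2
        refine h.congr_deriv ?_; ring
      have h2 : HasDerivAt (fun u => potEnergy F (y x u)) (-(F (y x s)) * y' x s) s :=
        (potEnergy_hasDerivAt hFc (y x s)).comp s (hode1 x hx s hs.1)
      have := h1.add h2
      have h0 : y' x s * F (y x s) + -(F (y x s)) * y' x s = 0 := by ring
      rw [h0] at this
      exact this.hasDerivWithinAt
    have hEcont : ContinuousOn E (Icc 0 t) := by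
      intro s hs
      have h1 : HasDerivAt (fun u => y' x u ^ 2 / 2) (y' x s * F (y x s)) s := by
        have := ((hode2 x hx s hs.1).fun_pow 2)
        have h := this.div_const 2
        refine h.congr_deriv ?_; ring
      have h2 : HasDerivAt (fun u => potEnergy F (y x u)) (-(F (y x s)) * y' x s) s :=
        (potEnergy_hasDerivAt hFc (y x s)).comp s (hode1 x hx s hs.1)
      exact ((h1.add h2).continuousAt).continuousWithinAt
    have := constant_of_has_deriv_right_zero hEcont hEderiv t (by exact ⟨ht, le_rfl⟩)
    simp only [hEdef] at this
    rw [this, hy0 x hx, hy0' x hx, initEnergy]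
  -- positivity of velocity
  have hvpos : ∀ x ∈ Icc (0:ℝ) 1, ∀ t, 0 ≤ t → 0 < y' x t := by
    intro x hx t ht
    by_contra hneg
    push_neg at hneg
    set S : Set ℝ := {s | 0 ≤ s ∧ y' x s ≤ 0} with hSdef
    have hSne : S.Nonempty := ⟨t, ht, hneg⟩
    have hSbdd : BddBelow S := ⟨0, fun s hs => hs.1⟩
    have hSclosed : IsClosed S := by
      have : S = Ici 0 ∩ y' x ⁻¹' Iic 0 := by ext s; simp [hSdef, and_comm]
      rw [this]
      exact ContinuousOn.preimage_isClosed_of_isClosed (hy'cont x hx) isClosed_Ici isClosed_Iic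
    obtain ⟨ht₀0, ht₀⟩ := hSclosed.csInf_mem hSne hSbdd
    set t₀ := sInf S
    have hpos_before : ∀ s, 0 ≤ s → s < t₀ → 0 < y' x s := by
      intro s hs0 hst
      by_contra h
      push_neg at h
      exact absurd (csInf_le hSbdd ⟨hs0, h⟩) (not_le.2 hst)
    have ht₀pos : 0 < t₀ := by
      rcases ht₀0.lt_or_eq with h | h
      · exact h
      · exfalso
        have h2 : y' x t₀ = v x := h ▸ hy0' x hx
        have := hv_pos x hx
        linarith
    -- y x t₀ ≥ x : y x is monotone on [0, t₀]
    have hmono : MonotoneOn (y x) (Icc 0 t₀) := by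
      apply monotoneOn_of_deriv_nonneg (convex_Icc 0 t₀)
      · exact (hycont x hx).mono (Icc_subset_Ici_self)
      · intro s hs
        rw [interior_Icc] at hs
        exact ((hode1 x hx s hs.1.le).differentiableAt).differentiableWithinAt
      · intro s hs
        rw [interior_Icc] at hs
        rw [(hode1 x hx s hs.1.le).deriv]
        exact (hpos_before s hs.1.le hs.2).le
    have hyx : x ≤ y x t₀ := by
      have := hmono (left_mem_Icc.2 ht₀0) (right_mem_Icc.2 ht₀0) ht₀0
      rwa [hy0 x hx] at this
    have hEn := hE x hx t₀ ht₀0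
    have hpos2 := hH x hx (y x t₀) hyx
    have hsq : 0 < y' x t₀ ^ 2 / 2 := by linarith
    have ht₀ne : y' x t₀ ≠ 0 := by
      intro h; rw [h] at hsq; norm_num at hsq
    have ht₀lt : y' x t₀ < 0 := lt_of_le_of_ne ht₀ ht₀ne
    -- IVT on [0, t₀]
    have hIVT : (0:ℝ) ∈ y' x '' Icc 0 t₀ := by
      have := intermediate_value_Icc' ht₀0 ((hy'cont x hx).mono Icc_subset_Ici_self)
      apply this
      rw [hy0' x hx]
      exact ⟨ht₀lt.le, (hv_pos x hx).le⟩
    obtain ⟨s, hs, hs0⟩ := hIVT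
    have hsS : s ∈ S := ⟨hs.1, hs0.le⟩
    have hseq : s = t₀ := le_antisymm hs.2 (csInf_le hSbdd hsS)
    rw [hseq] at hs0
    linarith
  -- strict monotonicity of trajectories in time
  have hsmono : ∀ x ∈ Icc (0:ℝ) 1, StrictMonoOn (y x) (Ici 0) := by
    intro x hx
    apply strictMonoOn_of_deriv_pos (convex_Ici 0) (hycont x hx)
    intro s hs
    rw [interior_Ici] at hs
    rw [(hode1 x hx s hs.le).deriv]
    exact hvpos x hx s hs.le
  -- characterization of hitting time
  have hTchar : ∀ x ∈ Icc (0:ℝ) 1, ∀ Y, x ≤ Y → ∀ t, 0 ≤ t → y x t = Y → T x Y = t := by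
    intro x hx Y hY t ht hyt
    obtain ⟨⟨hT0, hTY⟩, hTle⟩ := hT x hx Y hY
    exact (hsmono x hx).injOn hT0 ht (by rw [hTY, hyt])
  constructor
  · -- no collisions → strictAnti
    intro hnc Y hY x₁ hx₁ x₂ hx₂ hlt
    simp only [mem_Icc, le_min_iff] at hx₁ hx₂
    have hx₁' : x₁ ∈ Icc (0:ℝ) 1 := ⟨hx₁.1, hx₁.2.2⟩
    have hx₂' : x₂ ∈ Icc (0:ℝ) 1 := ⟨hx₂.1, hx₂.2.2⟩
    obtain ⟨⟨hT₁0, hT₁Y⟩, -⟩ := hT x₁ hx₁' Y hx₁.2.1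
    obtain ⟨⟨hT₂0, hT₂Y⟩, -⟩ := hT x₂ hx₂' Y hx₂.2.1
    -- ordering preserved: y x₁ t < y x₂ t for all t ≥ 0
    have hord : ∀ t, 0 ≤ t → y x₁ t < y x₂ t := by
      intro t ht
      by_contra h
      push_neg at h
      have hne : ∀ s, 0 ≤ s → y x₂ s - y x₁ s ≠ 0 := by
        intro s hs h0
        exact hnc s hs x₁ hx₁' x₂ hx₂' hlt.ne (by linarith)
      have hlt' : y x₂ t - y x₁ t < 0 :=
        lt_of_le_of_ne (by linarith) (hne t ht)
      have hg0 : 0 < y x₂ 0 - y x₁ 0 := by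
        rw [hy0 x₁ hx₁', hy0 x₂ hx₂']; linarith
      have hgcont : ContinuousOn (fun s => y x₂ s - y x₁ s) (Icc 0 t) :=
        ((hycont x₂ hx₂').sub (hycont x₁ hx₁')).mono Icc_subset_Ici_self
      have : (0:ℝ) ∈ (fun s => y x₂ s - y x₁ s) '' Icc 0 t := by
        apply intermediate_value_Icc' ht hgcont
        exact ⟨hlt'.le, hg0.le⟩
      obtain ⟨s, hs, hs0⟩ := this
      exact hne s hs.1 hs0
    have h2 : y x₁ (T x₂ Y) < y x₁ (T x₁ Y) := by
      calc y x₁ (T x₂ Y) < y x₂ (T x₂ Y) := hord (T x₂ Y) hT₂0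
        _ = Y := hT₂Y
        _ = y x₁ (T x₁ Y) := hT₁Y.symm
    exact ((hsmono x₁ hx₁').lt_iff_lt hT₂0 hT₁0).mp h2
  · -- strictAnti → no collisions
    intro h t ht x₁ hx₁ x₂ hx₂ hne heq
    have key : ∀ a ∈ Icc (0:ℝ) 1, ∀ b ∈ Icc (0:ℝ) 1, a < b → y a t = y b t → False := by
      intro a ha b hb hab heq'
      set Y := y b t with hYdef
      have hbY : b ≤ Y := by
        have := (hsmono b hb).monotoneOn (self_mem_Ici) ht ht
        rwa [hy0 b hb] at this
      have haY : a ≤ Y := hab.le.trans hbY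
      have hYpos : 0 < Y := lt_of_lt_of_le (lt_of_le_of_lt ha.1 hab) hbY
      have hTa : T a Y = t := hTchar a ha Y haY t ht heq'
      have hTb : T b Y = t := hTchar b hb Y hbY t ht rfl
      have hmem_a : a ∈ Icc (0:ℝ) (min Y 1) := ⟨ha.1, le_min haY ha.2⟩
      have hmem_b : b ∈ Icc (0:ℝ) (min Y 1) := ⟨hb.1, le_min hbY hb.2⟩
      have := h Y hYpos hmem_a hmem_b hab
      simp only [hTa, hTb] at this
      exact lt_irrefl t this
    rcases hne.lt_or_gt with hlt | hlt
    · exact key x₁ hx₁ x₂ hx₂ hlt heq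
    · exact key x₂ hx₂ x₁ hx₁ hlt heq.symm
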